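/- Let n ≥ 3 and let R = 𝔽₂[x,y]/⟨x^{n+1}, y² + x³⟩, graded with deg x = 2 and deg y = 3. Then y² = x³ ≠ 0 in R; consequently R is not isomorphic as a graded 𝔽₂-algebra to 𝔽₂[x,y']/⟨x^{n+1}, y'²⟩ with deg x = 2, deg y' = 3. -/

import Mathlib

/-! The cusp parametrization `x ↦ t², y ↦ t³` kills `y² + x³` in characteristic 2 and sends
`x^(n+1)` to `t^(2n+2)`, so it induces a map `R → 𝔽₂[t]/(t^(2n+2))` taking `x³` to
`t⁶ ≠ 0` when `n ≥ 3`. The degree-3 component of either ring is spanned by the class of `y`,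
so a graded isomorphism sends `y` to `c • y'` and hence `x³ = y²` to `c² • y'² = 0`,
contradicting injectivity. -/

set_option synthInstance.maxHeartbeats 400000

open MvPolynomial

noncomputable section

/-- The ideal `⟨x^(n+1), y² + x³⟩` of `𝔽₂[x,y]`, with `x = X 0`, `y = X 1`. -/
def I₁ (n : ℕ) : Ideal (MvPolynomial (Fin 2) (ZMod 2)) :=
  Ideal.span {X 0 ^ (n + 1), X 1 ^ 2 + X 0 ^ 3}

/-- The ideal `⟨x^(n+1), y'²⟩` of `𝔽₂[x,y']`, with `x = X 0`, `y' = X 1`. -/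
def I₂ (n : ℕ) : Ideal (MvPolynomial (Fin 2) (ZMod 2)) :=
  Ideal.span {X 0 ^ (n + 1), X 1 ^ 2}

/-- Degree-`i` component of a quotient of `𝔽₂[x,y]` by a homogeneous ideal, for the grading
`deg x = 2`, `deg y = 3`. -/
def comp (I : Ideal (MvPolynomial (Fin 2) (ZMod 2))) (i : ℕ) :
    Submodule (ZMod 2) (MvPolynomial (Fin 2) (ZMod 2) ⧸ I) :=
  Submodule.map (Ideal.Quotient.mkₐ (ZMod 2) I).toLinearMap
    (weightedHomogeneousSubmodule (ZMod 2) ![2, 3] i)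

lemma weight_two_three_eq_three_iff (d : Fin 2 →₀ ℕ) :
    Finsupp.weight ![2, 3] d = 3 ↔ d = Finsupp.single 1 1 := by
  rw [Finsupp.weight_apply, Finsupp.sum_fintype _ _ (by simp), Fin.sum_univ_two]
  simp only [Matrix.cons_val_zero, Matrix.cons_val_one, smul_eq_mul]
  constructor
  · intro h
    ext i
    fin_cases i <;> simp <;> omega
  · rintro rfl
    simp

lemma weightedHomogeneousSubmodule_two_three_three (R : Type*) [CommSemiring R] :
    weightedHomogeneousSubmodule R ![2, 3] 3 =
      Submodule.span R {(X 1 : MvPolynomial (Fin 2) R)} := by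
  have : {d : Fin 2 →₀ ℕ | Finsupp.weight ![2, 3] d = 3} = {Finsupp.single 1 1} := by
    ext d
    exact weight_two_three_eq_three_iff d
  rw [weightedHomogeneousSubmodule_eq_finsupp_supported, this,
    AddMonoidAlgebra.supported_eq_span_single,
    Set.image_singleton]
  rfl

lemma comp_three (I : Ideal (MvPolynomial (Fin 2) (ZMod 2))) :
    comp I 3 = Submodule.span (ZMod 2) {Ideal.Quotient.mk I (X 1)} := by
  rw [comp, weightedHomogeneousSubmodule_two_three_three, Submodule.map_span, Set.image_singleton]
  rfl

lemma I₁_le_comap_aeval (n : ℕ) :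
    I₁ n ≤ (Ideal.span {Polynomial.X ^ (2 * (n + 1))}).comap
      (aeval ![Polynomial.X ^ 2, Polynomial.X ^ 3] :
        MvPolynomial (Fin 2) (ZMod 2) →ₐ[ZMod 2] Polynomial (ZMod 2)) := by
  rw [I₁, Ideal.span_le, Set.insert_subset_iff, Set.singleton_subset_iff]
  constructor
  · simp [pow_mul]
  · simp [← pow_mul, CharTwo.add_self_eq_zero]

lemma X_zero_pow_three_not_mem_I₁ {n : ℕ} (hn : 3 ≤ n) :
    (X 0 : MvPolynomial (Fin 2) (ZMod 2)) ^ 3 ∉ I₁ n := by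
  intro h
  have hdvd := I₁_le_comap_aeval n h
  rw [Ideal.mem_comap, map_pow, aeval_X, Ideal.mem_span_singleton] at hdvd
  simp only [Matrix.cons_val_zero, ← pow_mul] at hdvd
  rw [pow_dvd_pow_iff Polynomial.X_ne_zero Polynomial.not_isUnit_X] at hdvd
  omega

lemma mk_X_one_sq_I₁ (n : ℕ) :
    Ideal.Quotient.mk (I₁ n) (X 1) ^ 2 = Ideal.Quotient.mk (I₁ n) (X 0) ^ 3 := by
  rw [← map_pow, ← map_pow, Ideal.Quotient.eq, CharTwo.sub_eq_add]
  exact Ideal.subset_span (by simp)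

lemma mk_X_one_sq_I₂ (n : ℕ) : Ideal.Quotient.mk (I₂ n) (X 1) ^ 2 = 0 := by
  rw [← map_pow, Ideal.Quotient.eq_zero_iff_mem]
  exact Ideal.subset_span (by simp)

/-- For `n ≥ 3`, in `R = 𝔽₂[x,y]/⟨x^(n+1), y² + x³⟩` (with `deg x = 2`, `deg y = 3`) one has
`y² = x³ ≠ 0`; consequently `R` is not graded-isomorphic to `𝔽₂[x,y']/⟨x^(n+1), y'²⟩`. -/
theorem y_sq_ne_zero_and_not_graded_iso (n : ℕ) (hn : 3 ≤ n) :
    Ideal.Quotient.mk (I₁ n) (X 1) ^ 2 = Ideal.Quotient.mk (I₁ n) (X 0) ^ 3 ∧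
    Ideal.Quotient.mk (I₁ n) (X 0) ^ 3 ≠ 0 ∧
    ¬ ∃ e : (MvPolynomial (Fin 2) (ZMod 2) ⧸ I₁ n) ≃ₐ[ZMod 2]
            (MvPolynomial (Fin 2) (ZMod 2) ⧸ I₂ n),
        ∀ i : ℕ, Submodule.map e.toLinearMap (comp (I₁ n) i) = comp (I₂ n) i := by
  have hx : Ideal.Quotient.mk (I₁ n) (X 0) ^ 3 ≠ 0 := by
    rw [← map_pow, Ne, Ideal.Quotient.eq_zero_iff_mem]
    exact X_zero_pow_three_not_mem_I₁ hn
  refine ⟨mk_X_one_sq_I₁ n, hx, ?_⟩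
  rintro ⟨e, he⟩
  obtain ⟨c, hc⟩ : ∃ c : ZMod 2,
      c • Ideal.Quotient.mk (I₂ n) (X 1) = e (Ideal.Quotient.mk (I₁ n) (X 1)) := by
    rw [← Submodule.mem_span_singleton, ← comp_three, ← he 3, comp_three]
    exact Submodule.mem_map_of_mem (Submodule.mem_span_singleton_self _)
  apply hx
  apply e.injective
  rw [← mk_X_one_sq_I₁, map_pow, ← hc, smul_pow, mk_X_one_sq_I₂, smul_zero, map_zero]

end
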